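/- Let H be a real Hilbert space, B a topological space, and A : B → B(H) a map, continuous for the operator-norm topology, such that each A_x is a skew-adjoint Fredholm operator (A_x* = −A_x) and x ↦ dim ker(A_x) is locally constant; let p_x denote the orthogonal projection of H onto ker(A_x). Suppose there is a map J : B → B(H), continuous for the operator-norm topology, such that each J_x is skew-adjoint, commutes with p_x, and satisfies J_x² u = −u for all u ∈ ker(A_x). Then for every real t ≠ 0 and every x ∈ B the operator A_x + t·J_x p_x is an invertible skew-adjoint operator, and the straight-line homotopy (s, x) ↦ A_x + s·t·J_x p_x, s ∈ [0,1], is a homotopy through skew-adjoint Fredholm operators from A to a family consisting of invertible operators. -/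

import Mathlib

/-- A bounded operator on a real Hilbert space is Fredholm if its kernel is
finite-dimensional and its range is closed and of finite codimension. -/
def IsFredholm {H : Type*} [NormedAddCommGroup H] [InnerProductSpace ℝ H]
    (T : H →L[ℝ] H) : Prop :=
  FiniteDimensional ℝ (LinearMap.ker (T : H →ₗ[ℝ] H)) ∧ IsClosed (LinearMap.range (T : H →ₗ[ℝ] H) : Set H) ∧
    FiniteDimensional ℝ (H ⧸ LinearMap.range (T : H →ₗ[ℝ] H))

open Classical in
/-- The orthogonal projection of `H` onto the kernel of `T`, as a bounded operator
`H →L[ℝ] H` (defined to be `0` if the kernel is not finite-dimensional). -/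
noncomputable def kerProjection {H : Type*} [NormedAddCommGroup H] [InnerProductSpace ℝ H]
    (T : H →L[ℝ] H) : H →L[ℝ] H :=
  if h : FiniteDimensional ℝ (LinearMap.ker (T : H →ₗ[ℝ] H)) then
    haveI := h
    (LinearMap.ker (T : H →ₗ[ℝ] H)).subtypeL.comp (LinearMap.ker (T : H →ₗ[ℝ] H)).orthogonalProjectionOnto
  else 0


/-!
On `ker A_x` the operator `A_x + t J_x p_x` acts as `t J_x`, which is invertible there because
`J_x` preserves `ker A_x` and squares to `-1` on it; on `(ker A_x)ᗮ`, which is `range A_x`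
because `A_x` is skew-adjoint with closed range, it acts as `A_x`. Skew-adjointness follows
from `p_x* = p_x` and `J_x p_x = p_x J_x`.

The analytic point is the norm continuity of `x ↦ p_x`. Since `A_{x₀}` has closed range, it is
bounded below, `‖v‖ ≤ C ‖A_{x₀} v‖`, on `(ker A_{x₀})ᗮ`; hence every `v ∈ ker A_x` lies within
`r ‖v‖` of `ker A_{x₀}`, where `r = C ‖A_x - A_{x₀}‖`. For `r ≤ 1/2` and kernels of equal
dimension the projection onto `ker A_{x₀}` then maps `ker A_x` onto it, which gives the converse
estimate with `2r`, and together `‖p_x - p_{x₀}‖ ≤ 3r`.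
-/

section Projection

open ContinuousLinearMap Submodule Module

variable {𝕜 E : Type*} [RCLike 𝕜] [NormedAddCommGroup E] [InnerProductSpace 𝕜 E]

lemma Submodule.norm_sub_starProjection_le {U : Submodule 𝕜 E} [U.HasOrthogonalProjection]
    (y : E) {x : E} (hx : x ∈ U) : ‖y - U.starProjection y‖ ≤ ‖y - x‖ := by
  rw [starProjection_minimal]
  exact ciInf_le ⟨0, Set.forall_mem_range.2 fun _ => norm_nonneg _⟩ (⟨x, hx⟩ : U)

lemma Submodule.norm_le_two_mul_norm_starProjection {U : Submodule 𝕜 E}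
    [U.HasOrthogonalProjection] {v : E} {r : ℝ} (hr : r ≤ 1 / 2)
    (hv : ‖v - U.starProjection v‖ ≤ r * ‖v‖) : ‖v‖ ≤ 2 * ‖U.starProjection v‖ := by
  have := norm_le_insert' v (U.starProjection v)
  nlinarith [mul_le_mul_of_nonneg_right hr (norm_nonneg v)]

lemma Submodule.norm_sub_starProjection_le_of_forall {U V : Submodule 𝕜 E}
    [FiniteDimensional 𝕜 U] [FiniteDimensional 𝕜 V] (hrank : finrank 𝕜 V = finrank 𝕜 U)
    {r : ℝ} (hr0 : 0 ≤ r) (hr : r ≤ 1 / 2)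
    (hV : ∀ v ∈ V, ‖v - U.starProjection v‖ ≤ r * ‖v‖) :
    ∀ u ∈ U, ‖u - V.starProjection u‖ ≤ 2 * r * ‖u‖ := by
  have hsurj : Function.Surjective (U.orthogonalProjectionOnto ∘L V.subtypeL : V →ₗ[𝕜] U) := by
    refine (LinearMap.injective_iff_surjective_of_finrank_eq_finrank hrank).1 ?_
    refine (injective_iff_map_eq_zero _).2 fun v hv => ?_
    have hPv : U.starProjection v = 0 := by
      rw [starProjection_apply]; exact congrArg Subtype.val hv
    have := norm_le_two_mul_norm_starProjection hr (hV v v.2)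
    rw [hPv, norm_zero, mul_zero] at this
    exact Subtype.ext (norm_le_zero_iff.1 this)
  intro u hu
  obtain ⟨v, hv⟩ := hsurj ⟨u, hu⟩
  have hPv : U.starProjection v = u := by
    rw [starProjection_apply]; exact congrArg Subtype.val hv
  calc ‖u - V.starProjection u‖ ≤ ‖u - v‖ := norm_sub_starProjection_le u v.2
    _ = ‖v - U.starProjection v‖ := by rw [hPv, norm_sub_rev]
    _ ≤ r * ‖(v : E)‖ := hV v v.2
    _ ≤ r * (2 * ‖u‖) := by
      gcongr
      simpa [hPv] using norm_le_two_mul_norm_starProjection hr (hV v v.2)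
    _ = 2 * r * ‖u‖ := by ring

lemma Submodule.norm_one_sub_starProjection_mul_starProjection_le {U V : Submodule 𝕜 E}
    [U.HasOrthogonalProjection] [V.HasOrthogonalProjection] {a : ℝ} (ha : 0 ≤ a)
    (hU : ∀ u ∈ U, ‖u - V.starProjection u‖ ≤ a * ‖u‖) :
    ‖(1 - V.starProjection) * U.starProjection‖ ≤ a := by
  refine opNorm_le_bound _ ha fun w => ?_
  calc ‖U.starProjection w - V.starProjection (U.starProjection w)‖
      ≤ a * ‖U.starProjection w‖ := hU _ (starProjection_apply_mem U w)
    _ ≤ a * ‖w‖ := by gcongr; exact U.norm_starProjection_apply_le w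

lemma Submodule.norm_starProjection_sub_starProjection_le [CompleteSpace E]
    {U V : Submodule 𝕜 E} [U.HasOrthogonalProjection] [V.HasOrthogonalProjection]
    {a b : ℝ} (ha : 0 ≤ a) (hb : 0 ≤ b)
    (hU : ∀ u ∈ U, ‖u - V.starProjection u‖ ≤ a * ‖u‖)
    (hV : ∀ v ∈ V, ‖v - U.starProjection v‖ ≤ b * ‖v‖) :
    ‖V.starProjection - U.starProjection‖ ≤ a + b := by
  set P := U.starProjection
  set Q := V.starProjection
  have hstar : star ((1 - P) * Q) = Q * (1 - P) := by
    rw [star_mul, star_sub, star_one, (isSelfAdjoint_starProjection U).star_eq,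
      (isSelfAdjoint_starProjection V).star_eq]
  calc ‖Q - P‖ = ‖star ((1 - P) * Q) - (1 - Q) * P‖ := by rw [hstar]; noncomm_ring
    _ ≤ ‖(1 - P) * Q‖ + ‖(1 - Q) * P‖ := by rw [← norm_star ((1 - P) * Q)]; exact norm_sub_le _ _
    _ ≤ b + a := add_le_add (norm_one_sub_starProjection_mul_starProjection_le hb hV)
        (norm_one_sub_starProjection_mul_starProjection_le ha hU)
    _ = a + b := add_comm b a

end Projection

section ClosedRange

open ContinuousLinearMap Submodule

variable {𝕜 E F : Type*} [RCLike 𝕜] [NormedAddCommGroup E] [InnerProductSpace 𝕜 E]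
  [CompleteSpace E] [NormedAddCommGroup F] [NormedSpace 𝕜 F] [CompleteSpace F]

lemma ContinuousLinearMap.exists_norm_le_mul_norm_apply_of_mem_orthogonal_ker
    {T : E →L[𝕜] F} (hT : IsClosed (T.range : Set F)) :
    ∃ C > 0, ∀ v ∈ T.kerᗮ, ‖v‖ ≤ C * ‖T v‖ := by
  have : CompleteSpace T.range := hT.completeSpace_coe
  obtain ⟨C, hC, hpre⟩ := exists_preimage_norm_le T.rangeRestrict
    (by rintro ⟨_, x, rfl⟩; exact ⟨x, rfl⟩)
  refine ⟨C, hC, fun v hv => ?_⟩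
  obtain ⟨x, hx, hxC⟩ := hpre (T.rangeRestrict v)
  have hxv : x - v ∈ T.ker := by
    rw [LinearMap.mem_ker, coe_coe, map_sub, sub_eq_zero]
    exact congrArg Subtype.val hx
  have hpyth := norm_add_sq_eq_norm_sq_add_norm_sq_of_inner_eq_zero v (x - v)
    (inner_left_of_mem_orthogonal hxv hv)
  rw [add_sub_cancel] at hpyth
  calc ‖v‖ ≤ ‖x‖ := by nlinarith [norm_nonneg v, norm_nonneg x, mul_self_nonneg ‖x - v‖]
    _ ≤ C * ‖T.rangeRestrict v‖ := hxC
    _ = C * ‖T v‖ := rfl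

end ClosedRange

section KerProjection

open ContinuousLinearMap Submodule Module Filter Topology

variable {H : Type*} [NormedAddCommGroup H] [InnerProductSpace ℝ H]

lemma kerProjection_eq_starProjection (T : H →L[ℝ] H) [FiniteDimensional ℝ T.ker] :
    kerProjection T = T.ker.starProjection :=
  dif_pos ‹_›

lemma kerProjection_apply_mem (T : H →L[ℝ] H) [FiniteDimensional ℝ T.ker] (u : H) :
    kerProjection T u ∈ T.ker := by
  rw [kerProjection_eq_starProjection]; exact starProjection_apply_mem _ u

lemma kerProjection_apply_of_mem {T : H →L[ℝ] H} [FiniteDimensional ℝ T.ker] {u : H}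
    (hu : u ∈ T.ker) : kerProjection T u = u := by
  rw [kerProjection_eq_starProjection]; exact starProjection_eq_self_iff.2 hu

lemma sub_kerProjection_apply_mem_orthogonal (T : H →L[ℝ] H) [FiniteDimensional ℝ T.ker]
    (u : H) : u - kerProjection T u ∈ T.kerᗮ := by
  rw [kerProjection_eq_starProjection]; exact sub_starProjection_mem_orthogonal u

lemma apply_mem_ker_of_commute_kerProjection {T J : H →L[ℝ] H} [FiniteDimensional ℝ T.ker]
    (hcomm : Commute J (kerProjection T)) {u : H} (hu : u ∈ T.ker) : J u ∈ T.ker := by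
  rw [← kerProjection_apply_of_mem hu, ← mul_apply_eq_comp, hcomm.eq]
  exact kerProjection_apply_mem T _

lemma norm_sub_starProjection_ker_le {T₀ T₁ : H →L[ℝ] H} [T₀.ker.HasOrthogonalProjection]
    {C : ℝ} (hC0 : 0 ≤ C) (hC : ∀ w ∈ T₀.kerᗮ, ‖w‖ ≤ C * ‖T₀ w‖) {v : H} (hv : v ∈ T₁.ker) :
    ‖v - T₀.ker.starProjection v‖ ≤ C * ‖T₁ - T₀‖ * ‖v‖ := by
  have hT₀ : T₀ (v - T₀.ker.starProjection v) = (T₀ - T₁) v := by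
    have hP : T₀ (T₀.ker.starProjection v) = 0 := starProjection_apply_mem T₀.ker v
    have hT₁ : T₁ v = 0 := hv
    rw [map_sub, hP, sub_apply, hT₁]
  calc ‖v - T₀.ker.starProjection v‖ ≤ C * ‖(T₀ - T₁) v‖ := by
        rw [← hT₀]; exact hC _ (sub_starProjection_mem_orthogonal v)
    _ ≤ C * (‖T₁ - T₀‖ * ‖v‖) := by
        rw [norm_sub_rev T₁]; gcongr; exact le_opNorm _ _
    _ = C * ‖T₁ - T₀‖ * ‖v‖ := by ring

lemma norm_kerProjection_sub_kerProjection_le [CompleteSpace H] {T₀ T₁ : H →L[ℝ] H}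
    [FiniteDimensional ℝ T₀.ker] [FiniteDimensional ℝ T₁.ker]
    (hrank : finrank ℝ T₁.ker = finrank ℝ T₀.ker) {C : ℝ} (hC0 : 0 ≤ C)
    (hC : ∀ w ∈ T₀.kerᗮ, ‖w‖ ≤ C * ‖T₀ w‖) (hsmall : C * ‖T₁ - T₀‖ ≤ 1 / 2) :
    ‖kerProjection T₁ - kerProjection T₀‖ ≤ 3 * (C * ‖T₁ - T₀‖) := by
  have hr0 : 0 ≤ C * ‖T₁ - T₀‖ := by positivity
  have hV := fun v (hv : v ∈ T₁.ker) => norm_sub_starProjection_ker_le hC0 hC hv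
  have hU := norm_sub_starProjection_le_of_forall hrank hr0 hsmall hV
  rw [kerProjection_eq_starProjection, kerProjection_eq_starProjection]
  linarith [norm_starProjection_sub_starProjection_le (by positivity) hr0 hU hV]

lemma continuous_kerProjection [CompleteSpace H] {B : Type*} [TopologicalSpace B]
    {A : B → H →L[ℝ] H} (hA : Continuous A) [∀ x, FiniteDimensional ℝ (A x).ker]
    (hclosed : ∀ x, IsClosed ((A x).range : Set H))
    (hrank : IsLocallyConstant fun x => finrank ℝ (A x).ker) :
    Continuous fun x => kerProjection (A x) := by
  refine continuous_iff_continuousAt.2 fun x₀ => ?_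
  obtain ⟨C, hC0, hC⟩ := exists_norm_le_mul_norm_apply_of_mem_orthogonal_ker (hclosed x₀)
  have hA₀ : Tendsto (fun x => C * ‖A x - A x₀‖) (𝓝 x₀) (𝓝 0) := by
    simpa using (tendsto_iff_norm_sub_tendsto_zero.1 (hA.tendsto x₀)).const_mul C
  rw [ContinuousAt, tendsto_iff_norm_sub_tendsto_zero]
  refine squeeze_zero' (.of_forall fun _ => norm_nonneg _) ?_ (by simpa using hA₀.const_mul 3)
  filter_upwards [hrank.eventually_eq x₀, hA₀.eventually (eventually_le_nhds one_half_pos)]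
    with x hxrank hxsmall
  exact norm_kerProjection_sub_kerProjection_le hxrank hC0.le hC hxsmall

end KerProjection

section SkewAdjoint

open ContinuousLinearMap Submodule

variable {H : Type*} [NormedAddCommGroup H] [InnerProductSpace ℝ H] [CompleteSpace H]

lemma range_eq_orthogonal_ker_of_adjoint_eq_neg {T : H →L[ℝ] H} (hT : adjoint T = -T)
    (hcl : IsClosed (T.range : Set H)) : T.range = T.kerᗮ := by
  rw [orthogonal_ker, hT, toLinearMap_neg, LinearMap.range_neg,
    hcl.submodule_topologicalClosure_eq]

variable {T J : H →L[ℝ] H} [FiniteDimensional ℝ T.ker]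

lemma kerProjection_apply_apply_of_adjoint_eq_neg (hT : adjoint T = -T) (u : H) :
    kerProjection T (T u) = 0 := by
  rw [kerProjection_eq_starProjection, starProjection_apply_eq_zero_iff]
  intro v hv
  have hTv : T v = 0 := hv
  rw [← adjoint_inner_left, hT, neg_apply, hTv, neg_zero, inner_zero_left]

lemma adjoint_add_smul_mul_kerProjection (hT : adjoint T = -T) (hJ : adjoint J = -J)
    (hcomm : Commute J (kerProjection T)) (c : ℝ) :
    adjoint (T + c • (J * kerProjection T)) = -(T + c • (J * kerProjection T)) := by
  have hp : star (kerProjection T) = kerProjection T := by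
    rw [kerProjection_eq_starProjection]; exact (isSelfAdjoint_starProjection _).star_eq
  rw [← star_eq_adjoint, star_add, star_smul, star_mul, hp, star_eq_adjoint, star_eq_adjoint, hT,
    hJ, star_trivial, mul_neg, ← hcomm.eq, neg_add, smul_neg]

variable (hcomm : Commute J (kerProjection T)) (hsq : ∀ u ∈ T.ker, J (J u) = -u)
include hcomm hsq

lemma injective_add_smul_mul_kerProjection (hT : adjoint T = -T) {c : ℝ} (hc : c ≠ 0) :
    Function.Injective (T + c • (J * kerProjection T)) := by
  refine (injective_iff_map_eq_zero _).2 fun u hu => ?_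
  have hpu := kerProjection_apply_mem T u
  have hJpu := apply_mem_ker_of_commute_kerProjection hcomm hpu
  simp only [add_apply, smul_apply, mul_apply_eq_comp] at hu
  have hJpu0 : J (kerProjection T u) = 0 := by
    have := congrArg (kerProjection T) hu
    rw [map_add, map_smul, kerProjection_apply_apply_of_adjoint_eq_neg hT,
      kerProjection_apply_of_mem hJpu, zero_add, map_zero] at this
    exact (smul_eq_zero.1 this).resolve_left hc
  have hpu0 : kerProjection T u = 0 := by
    rw [← neg_neg (kerProjection T u), ← hsq _ hpu, hJpu0, map_zero, neg_zero]
  rw [hJpu0, smul_zero, add_zero] at hu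
  rw [← kerProjection_apply_of_mem hu, hpu0]

lemma surjective_add_smul_mul_kerProjection (hT : adjoint T = -T)
    (hcl : IsClosed (T.range : Set H)) {c : ℝ} (hc : c ≠ 0) :
    Function.Surjective (T + c • (J * kerProjection T)) := by
  intro w
  obtain ⟨z, hz⟩ : w - kerProjection T w ∈ T.range := by
    rw [range_eq_orthogonal_ker_of_adjoint_eq_neg hT hcl]
    exact sub_kerProjection_apply_mem_orthogonal T w
  have hpz := kerProjection_apply_mem T z
  have hpw := kerProjection_apply_mem T w
  have hJpw := apply_mem_ker_of_commute_kerProjection hcomm hpw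
  have hTpz : T (kerProjection T z) = 0 := hpz
  have hTJpw : T (J (kerProjection T w)) = 0 := hJpw
  refine ⟨z - kerProjection T z - c⁻¹ • J (kerProjection T w), ?_⟩
  simp only [add_apply, smul_apply, mul_apply_eq_comp, map_sub, map_smul,
    kerProjection_apply_of_mem hpz, kerProjection_apply_of_mem hJpw, hsq _ hpw, hTpz, hTJpw]
  rw [show T z = _ from hz, zero_add, zero_add, smul_neg, smul_neg, smul_smul,
    inv_mul_cancel₀ hc, one_smul]
  abel

end SkewAdjoint

section Fredholm

open ContinuousLinearMap (adjoint isUnit_iff_bijective)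

variable {H : Type*} [NormedAddCommGroup H] [InnerProductSpace ℝ H]

lemma isFredholm_of_bijective {T : H →L[ℝ] H} (hT : Function.Bijective T) : IsFredholm T := by
  have hker : T.ker = ⊥ := LinearMap.ker_eq_bot.2 hT.1
  have hrange : T.range = ⊤ := LinearMap.range_eq_top.2 hT.2
  refine ⟨?_, ?_, ?_⟩
  · rw [hker]; infer_instance
  · rw [hrange]; exact isClosed_univ
  · rw [hrange]; infer_instance

variable [CompleteSpace H] {T J : H →L[ℝ] H}

lemma isUnit_add_smul_mul_kerProjection [FiniteDimensional ℝ T.ker] (hT : adjoint T = -T)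
    (hcl : IsClosed (T.range : Set H)) (hcomm : Commute J (kerProjection T))
    (hsq : ∀ u ∈ T.ker, J (J u) = -u) {c : ℝ} (hc : c ≠ 0) :
    IsUnit (T + c • (J * kerProjection T)) :=
  isUnit_iff_bijective.2 ⟨injective_add_smul_mul_kerProjection hcomm hsq hT hc,
    surjective_add_smul_mul_kerProjection hcomm hsq hT hcl hc⟩

lemma isFredholm_add_smul_mul_kerProjection (hT : adjoint T = -T) (hfred : IsFredholm T)
    (hcomm : Commute J (kerProjection T)) (hsq : ∀ u ∈ T.ker, J (J u) = -u) (c : ℝ) :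
    IsFredholm (T + c • (J * kerProjection T)) := by
  have := hfred.1
  rcases eq_or_ne c 0 with rfl | hc
  · simpa using hfred
  · exact isFredholm_of_bijective (isUnit_iff_bijective.1
      (isUnit_add_smul_mul_kerProjection hT hfred.2.1 hcomm hsq hc))

end Fredholm

/-- Let `A` be a norm-continuous family of skew-adjoint Fredholm operators
on a real Hilbert space with locally constant kernel dimension, `p x` the orthogonal
projection onto `ker (A x)`, and `J` a norm-continuous family of skew-adjoint operators,
commuting with `p x`, which restrict to complex structures on `ker (A x)`.  Then for every
real `t ≠ 0` each operator `A x + t • (J x * p x)` is invertible and skew-adjoint, and the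
straight-line homotopy `(s, x) ↦ A x + (s * t) • (J x * p x)` is a homotopy through
skew-adjoint Fredholm operators from `A` to a family of invertible operators. -/
theorem stmt12 {H : Type*} [NormedAddCommGroup H] [InnerProductSpace ℝ H] [CompleteSpace H]
    {B : Type*} [TopologicalSpace B]
    (A : B → H →L[ℝ] H) (hA : Continuous A)
    (hskew : ∀ x, ContinuousLinearMap.adjoint (A x) = -(A x))
    (hfred : ∀ x, IsFredholm (A x))
    (hker : IsLocallyConstant fun x => Module.finrank ℝ (LinearMap.ker (A x : H →ₗ[ℝ] H)))
    (J : B → H →L[ℝ] H) (hJ : Continuous J)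
    (hJskew : ∀ x, ContinuousLinearMap.adjoint (J x) = -(J x))
    (hJcomm : ∀ x, Commute (J x) (kerProjection (A x)))
    (hJsq : ∀ x, ∀ u ∈ LinearMap.ker (A x : H →ₗ[ℝ] H), J x (J x u) = -u)
    (t : ℝ) (ht : t ≠ 0) :
    (∀ x, ContinuousLinearMap.adjoint (A x + t • (J x * kerProjection (A x)))
            = -(A x + t • (J x * kerProjection (A x))) ∧
          IsUnit (A x + t • (J x * kerProjection (A x)))) ∧
    Continuous (fun q : ℝ × B =>
      A q.2 + (q.1 * t) • (J q.2 * kerProjection (A q.2))) ∧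
    (∀ s ∈ Set.Icc (0 : ℝ) 1, ∀ x,
      ContinuousLinearMap.adjoint (A x + (s * t) • (J x * kerProjection (A x)))
          = -(A x + (s * t) • (J x * kerProjection (A x))) ∧
      IsFredholm (A x + (s * t) • (J x * kerProjection (A x)))) := by
  have hfin : ∀ x, FiniteDimensional ℝ (LinearMap.ker (A x : H →ₗ[ℝ] H)) := fun x => (hfred x).1
  have hp : Continuous fun x => kerProjection (A x) :=
    continuous_kerProjection hA (fun x => (hfred x).2.1) hker
  refine ⟨fun x => ⟨?_, ?_⟩, ?_, fun s _ x => ⟨?_, ?_⟩⟩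
  · exact adjoint_add_smul_mul_kerProjection (hskew x) (hJskew x) (hJcomm x) t
  · exact isUnit_add_smul_mul_kerProjection (hskew x) (hfred x).2.1 (hJcomm x) (hJsq x) ht
  · exact (hA.comp continuous_snd).add <| (continuous_fst.mul continuous_const).smul <|
      (hJ.comp continuous_snd).mul (hp.comp continuous_snd)
  · exact adjoint_add_smul_mul_kerProjection (hskew x) (hJskew x) (hJcomm x) (s * t)
  · exact isFredholm_add_smul_mul_kerProjection (hskew x) (hfred x) (hJcomm x) (hJsq x) (s * t)
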